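/- arXiv:2203.03020 — 2 statements merged into one kernel-verified Lean document; each statement's English description precedes it below -/
import Mathlib

section
/- Let Π be the set of deterministic regimes g : 𝓛 → {0,1} and Π* the set of regimes g* : {0,1} × 𝓛 → {0,1} depending on (A, L). If Yᵃ ⫫ A | L for a ∈ {0,1}, then for every g* ∈ Π*, E[Y^{g*(A,L)}] lies in the closed interval [min_{g∈Π} E[Y^{g(L)}], max_{g∈Π} E[Y^{g(L)}]]. -/
open scoped Classical
open Finset

noncomputable def pr {Ω : Type*} [Fintype Ω] (p : Ω → ℝ) (E : Ω → Prop) : ℝ :=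
  ∑ ω, if E ω then p ω else 0

noncomputable def cex {Ω : Type*} [Fintype Ω] (p : Ω → ℝ) (f : Ω → ℝ) (E : Ω → Prop) : ℝ :=
  (∑ ω, if E ω then p ω * f ω else 0) / pr p E

noncomputable def ex {Ω : Type*} [Fintype Ω] (p : Ω → ℝ) (f : Ω → ℝ) : ℝ :=
  ∑ ω, p ω * f ω

noncomputable def cpr {Ω : Type*} [Fintype Ω] (p : Ω → ℝ) (E F : Ω → Prop) : ℝ :=
  pr p (fun ω => E ω ∧ F ω) / pr p F

lemma pr_nonneg' {Ω : Type*} [Fintype Ω] (p : Ω → ℝ) (hp : ∀ ω, 0 ≤ p ω) (E : Ω → Prop) :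
    0 ≤ pr p E := by
  unfold pr
  refine Finset.sum_nonneg fun i _ => ?_
  split <;> simp [hp i]

lemma num_eq' {Ω : Type*} [Fintype Ω] (p : Ω → ℝ) (hp : ∀ ω, 0 ≤ p ω)
    (f : Ω → ℝ) (E : Ω → Prop) :
    (∑ ω, if E ω then p ω * f ω else 0) = pr p E * cex p f E := by
  unfold cex
  rcases eq_or_ne (pr p E) 0 with h | h
  · have hz : ∀ ω, E ω → p ω = 0 := by
      intro ω hE
      have h' := (Finset.sum_eq_zero_iff_of_nonneg
        (fun i _ => by split <;> simp [hp i])).mp h ω (Finset.mem_univ ω)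
      simpa [hE] using h'
    have : (∑ ω, if E ω then p ω * f ω else 0) = 0 := by
      refine Finset.sum_eq_zero fun ω _ => ?_
      split
      · next hE => simp [hz ω hE]
      · rfl
    simp [this, h]
  · rw [mul_comm, div_mul_cancel₀ _ h]

/-- Under L-exchangeability, the value of any regime `g* : {0,1} × 𝓛 → {0,1}` lies in the
interval spanned by the values of deterministic regimes `g : 𝓛 → {0,1}`. -/
theorem stmt9
    {Ω 𝓛 : Type*} [Fintype Ω] [Fintype 𝓛]
    (p : Ω → ℝ) (hp : ∀ ω, 0 ≤ p ω) (hsum : ∑ ω, p ω = 1)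
    (Y : Bool → Ω → ℝ) (A : Ω → Bool) (L : Ω → 𝓛)
    -- positivity
    (hpos : ∀ (a' : Bool) (l : 𝓛), pr p (fun ω => L ω = l) > 0 →
      pr p (fun ω => A ω = a' ∧ L ω = l) > 0)
    -- L-exchangeability as conditional mean independence
    (hexch : ∀ (a a' : Bool) (l : 𝓛), pr p (fun ω => A ω = a' ∧ L ω = l) > 0 →
      cex p (Y a) (fun ω => A ω = a' ∧ L ω = l) = cex p (Y a) (fun ω => L ω = l)) :
    ∀ gs : Bool → 𝓛 → Bool,
      (⨅ g : 𝓛 → Bool, ex p (fun ω => Y (g (L ω)) ω)) ≤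
        ex p (fun ω => Y (gs (A ω) (L ω)) ω) ∧
      ex p (fun ω => Y (gs (A ω) (L ω)) ω) ≤
        ⨆ g : 𝓛 → Bool, ex p (fun ω => Y (g (L ω)) ω) := by
  intro gs
  set h : Bool → 𝓛 → ℝ := fun a l => cex p (Y a) (fun ω => L ω = l) with hh
  have prnn := pr_nonneg' p hp
  -- collapsing lemmas
  have key2 : ∀ (c : Bool → 𝓛 → ℝ) (ω : Ω),
      (∑ a, ∑ l, if A ω = a ∧ L ω = l then c a l else 0) = c (A ω) (L ω) := by
    intro c ω
    simp [ite_and, Finset.sum_ite_eq]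
  have key1 : ∀ (c : 𝓛 → ℝ) (ω : Ω), (∑ l, if L ω = l then c l else 0) = c (L ω) := by
    intro c ω
    simp [Finset.sum_ite_eq]
  -- decomposition of E[Y^{gs(A,L)}]
  have exgs : ex p (fun ω => Y (gs (A ω) (L ω)) ω)
      = ∑ a, ∑ l, pr p (fun ω => A ω = a ∧ L ω = l) * h (gs a l) l := by
    calc ex p (fun ω => Y (gs (A ω) (L ω)) ω)
        = ∑ ω, ∑ a, ∑ l, if A ω = a ∧ L ω = l then p ω * Y (gs a l) ω else 0 := by
          unfold ex
          exact Finset.sum_congr rfl fun ω _ =>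
            (key2 (fun a l => p ω * Y (gs a l) ω) ω).symm
      _ = ∑ a, ∑ l, ∑ ω, if A ω = a ∧ L ω = l then p ω * Y (gs a l) ω else 0 := by
          rw [Finset.sum_comm]
          exact Finset.sum_congr rfl fun a _ => Finset.sum_comm
      _ = ∑ a, ∑ l, pr p (fun ω => A ω = a ∧ L ω = l)
            * cex p (Y (gs a l)) (fun ω => A ω = a ∧ L ω = l) := by
          refine Finset.sum_congr rfl fun a _ => Finset.sum_congr rfl fun l _ => ?_
          convert num_eq' p hp (Y (gs a l)) (fun ω => A ω = a ∧ L ω = l) using 2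
          split <;> rfl
      _ = ∑ a, ∑ l, pr p (fun ω => A ω = a ∧ L ω = l) * h (gs a l) l := by
          refine Finset.sum_congr rfl fun a _ => Finset.sum_congr rfl fun l _ => ?_
          rcases lt_or_eq_of_le (prnn (fun ω => A ω = a ∧ L ω = l)) with hpr | hpr
          · rw [hexch (gs a l) a l hpr]
          · rw [← hpr]; ring
  -- decomposition of E[Y^{g(L)}]
  have exg : ∀ g : 𝓛 → Bool, ex p (fun ω => Y (g (L ω)) ω)
      = ∑ l, pr p (fun ω => L ω = l) * h (g l) l := by
    intro g
    calc ex p (fun ω => Y (g (L ω)) ω)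
        = ∑ ω, ∑ l, if L ω = l then p ω * Y (g l) ω else 0 := by
          unfold ex
          exact Finset.sum_congr rfl fun ω _ =>
            (key1 (fun l => p ω * Y (g l) ω) ω).symm
      _ = ∑ l, ∑ ω, if L ω = l then p ω * Y (g l) ω else 0 := Finset.sum_comm
      _ = ∑ l, pr p (fun ω => L ω = l) * h (g l) l :=
          Finset.sum_congr rfl fun l _ => num_eq' p hp (Y (g l)) _
  -- marginalization
  have prsplit : ∀ l, pr p (fun ω => L ω = l) = ∑ a, pr p (fun ω => A ω = a ∧ L ω = l) := by
    intro l
    unfold pr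
    rw [Finset.sum_comm]
    refine Finset.sum_congr rfl fun ω _ => ?_
    cases hA : A ω <;> by_cases hL : L ω = l <;> simp [hA, hL]
  have sum_split : ∀ g : 𝓛 → Bool,
      (∑ l, pr p (fun ω => L ω = l) * h (g l) l)
        = ∑ a, ∑ l, pr p (fun ω => A ω = a ∧ L ω = l) * h (g l) l := by
    intro g
    rw [Finset.sum_comm]
    refine Finset.sum_congr rfl fun l _ => ?_
    rw [prsplit l, Finset.sum_mul]
  -- extremal regimes
  set gmin : 𝓛 → Bool := fun l => if h false l ≤ h true l then false else true with hgmin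
  set gmax : 𝓛 → Bool := fun l => if h false l ≤ h true l then true else false with hgmax
  have hmin : ∀ (b : Bool) (l : 𝓛), h (gmin l) l ≤ h b l := by
    intro b l
    cases b <;> simp only [hgmin] <;> split <;> first | exact le_refl _ |
      (first | exact le_of_not_ge (by assumption) | assumption)
  have hmax : ∀ (b : Bool) (l : 𝓛), h b l ≤ h (gmax l) l := by
    intro b l
    cases b <;> simp only [hgmax] <;> split <;> first | exact le_refl _ |
      (first | exact le_of_not_ge (by assumption) | assumption)
  have lower : ex p (fun ω => Y (gmin (L ω)) ω) ≤ ex p (fun ω => Y (gs (A ω) (L ω)) ω) := by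
    rw [exgs, exg gmin, sum_split gmin]
    exact Finset.sum_le_sum fun a _ => Finset.sum_le_sum fun l _ =>
      mul_le_mul_of_nonneg_left (hmin (gs a l) l) (prnn _)
  have upper : ex p (fun ω => Y (gs (A ω) (L ω)) ω) ≤ ex p (fun ω => Y (gmax (L ω)) ω) := by
    rw [exgs, exg gmax, sum_split gmax]
    exact Finset.sum_le_sum fun a _ => Finset.sum_le_sum fun l _ =>
      mul_le_mul_of_nonneg_left (hmax (gs a l) l) (prnn _)
  constructor
  · exact le_trans (ciInf_le (Set.Finite.bddBelow (Set.finite_range _)) gmin) lower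
  · exact le_trans upper (le_ciSup (f := fun g : 𝓛 → Bool => ex p (fun ω => Y (g (L ω)) ω)) (Set.Finite.bddAbove (Set.finite_range _)) gmax)
end

section
/- In the modified data-generating process with U, Z independent Bernoulli(1/2), P(A=1 | U=u, Z=z) = 1 − (0.3u + 0.4 + 0.2z), E[Y¹ | U=u] = 2u−1, E[Y⁰ | U=u] = 1−2u, and Yᵃ conditionally mean-independent of (A,Z) given U: E[Y] = E[Y^A] = −0.3, max(E[Y¹], E[Y⁰]) = 0 (the optimal-regime value), and E[Y^{g_sup}] = 0.3 where g_sup(a') = argmax_a E[Yᵃ | A=a']. Hence the superoptimal regime strictly outperforms both the observed regime and the optimal regime. -/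
open scoped Classical
open Finset

noncomputable def num' {Ω : Type*} [Fintype Ω] (p : Ω → ℝ) (f : Ω → ℝ) (E : Ω → Prop) : ℝ :=
  ∑ ω, if E ω then p ω * f ω else 0

lemma cex_eq' {Ω : Type*} [Fintype Ω] (p : Ω → ℝ) (f : Ω → ℝ) (E : Ω → Prop) :
    cex p f E = num' p f E / pr p E := rfl

lemma pr_congr' {Ω : Type*} [Fintype Ω] (p : Ω → ℝ) {E F : Ω → Prop}
    (h : ∀ ω, E ω ↔ F ω) : pr p E = pr p F := by
  unfold pr
  exact Finset.sum_congr rfl fun ω _ => if_congr (h ω) rfl rfl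

lemma pr_split' {Ω : Type*} [Fintype Ω] (p : Ω → ℝ) (X : Ω → Bool) (E : Ω → Prop) :
    pr p E = pr p (fun ω => E ω ∧ X ω = true) + pr p (fun ω => E ω ∧ X ω = false) := by
  unfold pr
  rw [← Finset.sum_add_distrib]
  exact Finset.sum_congr rfl fun ω _ => by
    cases h : X ω <;> by_cases hE : E ω <;> simp [hE, h]

/-- Example 2 (modified Qiu et al.): in the modified data-generating process,
`E[Y] = −0.3`, the optimal-regime value is `max(E[Y¹], E[Y⁰]) = 0`, and the
superoptimal value is `E[Y^{g_sup}] = 0.3`, strictly exceeding both. -/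
theorem stmt15
    {Ω : Type*} [Fintype Ω]
    (p : Ω → ℝ) (hp : ∀ ω, 0 ≤ p ω) (hsum : ∑ ω, p ω = 1)
    (Y : Bool → Ω → ℝ) (Yo : Ω → ℝ) (A Z U : Ω → Bool)
    (gsup : Bool → Bool)
    -- U, Z independent Bernoulli(1/2)
    (hUZ : ∀ u z, pr p (fun ω => U ω = u ∧ Z ω = z) = 1/4)
    -- P(A = 1 | U = u, Z = z) = 0.6 − 0.3·u − 0.2·z
    (hA : ∀ u z, cpr p (fun ω => A ω = true) (fun ω => U ω = u ∧ Z ω = z) =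
      0.6 - 0.3 * (if u then 1 else 0) - 0.2 * (if z then 1 else 0))
    -- all relevant events have positive probability
    (hpos : ∀ u z a, pr p (fun ω => U ω = u ∧ Z ω = z ∧ A ω = a) > 0)
    (hApos : ∀ a', pr p (fun ω => A ω = a') > 0)
    -- conditional mean independence of potential outcomes from (A, Z) given U
    (hmi : ∀ (a u a' z : Bool),
      cex p (Y a) (fun ω => U ω = u ∧ A ω = a' ∧ Z ω = z) =
      cex p (Y a) (fun ω => U ω = u))
    -- E[Y¹ | U = u] = 2u − 1, E[Y⁰ | U = u] = 1 − 2u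
    (hY1 : ∀ u, cex p (Y true) (fun ω => U ω = u) = 2 * (if u then 1 else 0) - 1)
    (hY0 : ∀ u, cex p (Y false) (fun ω => U ω = u) = 1 - 2 * (if u then 1 else 0))
    -- consistency
    (hcons : ∀ ω, 0 < p ω → Yo ω = Y (A ω) ω)
    -- g_sup(a') maximizes a ↦ E[Yᵃ | A = a']
    (hgsup : ∀ a' a, cex p (Y a) (fun ω => A ω = a') ≤
      cex p (Y (gsup a')) (fun ω => A ω = a')) :
    ex p Yo = -0.3 ∧
    max (ex p (Y true)) (ex p (Y false)) = 0 ∧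
    ex p (fun ω => Y (gsup (A ω)) ω) = 0.3 ∧
    ex p (fun ω => Y (gsup (A ω)) ω) > ex p Yo ∧
    ex p (fun ω => Y (gsup (A ω)) ω) > max (ex p (Y true)) (ex p (Y false)) := by
  -- point probabilities
  have hq1 : ∀ u z, pr p (fun ω => U ω = u ∧ Z ω = z ∧ A ω = true) =
      (0.6 - 0.3 * (if u then (1:ℝ) else 0) - 0.2 * (if z then (1:ℝ) else 0)) / 4 := by
    intro u z
    have h := hA u z
    unfold cpr at h
    rw [hUZ u z, div_eq_iff (by norm_num : (1:ℝ)/4 ≠ 0)] at h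
    have e : pr p (fun ω => U ω = u ∧ Z ω = z ∧ A ω = true)
        = pr p (fun ω => A ω = true ∧ (U ω = u ∧ Z ω = z)) := pr_congr' p (fun ω => by tauto)
    rw [e, h]; ring
  have hq0 : ∀ u z, pr p (fun ω => U ω = u ∧ Z ω = z ∧ A ω = false) =
      (0.4 + 0.3 * (if u then (1:ℝ) else 0) + 0.2 * (if z then (1:ℝ) else 0)) / 4 := by
    intro u z
    have hs := pr_split' p A (fun ω => U ω = u ∧ Z ω = z)
    rw [hUZ u z] at hs
    have e1 : pr p (fun ω => (U ω = u ∧ Z ω = z) ∧ A ω = true)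
        = pr p (fun ω => U ω = u ∧ Z ω = z ∧ A ω = true) := pr_congr' p (fun ω => by tauto)
    have e0 : pr p (fun ω => (U ω = u ∧ Z ω = z) ∧ A ω = false)
        = pr p (fun ω => U ω = u ∧ Z ω = z ∧ A ω = false) := pr_congr' p (fun ω => by tauto)
    rw [e1, e0, hq1 u z] at hs
    linarith
  -- numerators over cells
  have hnum : ∀ a u a' z, num' p (Y a) (fun ω => U ω = u ∧ A ω = a' ∧ Z ω = z)
      = cex p (Y a) (fun ω => U ω = u) * pr p (fun ω => U ω = u ∧ Z ω = z ∧ A ω = a') := by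
    intro a u a' z
    have h := hmi a u a' z
    rw [cex_eq' p (Y a) (fun ω => U ω = u ∧ A ω = a' ∧ Z ω = z),
      show pr p (fun ω => U ω = u ∧ A ω = a' ∧ Z ω = z)
        = pr p (fun ω => U ω = u ∧ Z ω = z ∧ A ω = a') from pr_congr' p (fun ω => by tauto),
      div_eq_iff (ne_of_gt (hpos u z a'))] at h
    exact h
  -- marginal of U
  have prU : ∀ u, pr p (fun ω => U ω = u) = 1/2 := by
    intro u
    have hs := pr_split' p Z (fun ω => U ω = u)
    rw [hUZ u true, hUZ u false] at hs
    rw [hs]; norm_num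
  have numU : ∀ a u, num' p (Y a) (fun ω => U ω = u)
      = cex p (Y a) (fun ω => U ω = u) * (1/2) := by
    intro a u
    have h := cex_eq' p (Y a) (fun ω => U ω = u)
    rw [prU u] at h
    rw [eq_div_iff (by norm_num : (1:ℝ)/2 ≠ 0)] at h
    exact h.symm
  -- marginal expectations of potential outcomes
  have exY : ∀ a, ex p (Y a) = cex p (Y a) (fun ω => U ω = true) * (1/2)
      + cex p (Y a) (fun ω => U ω = false) * (1/2) := by
    intro a
    have h2 : ex p (Y a) = num' p (Y a) (fun ω => U ω = true)
        + num' p (Y a) (fun ω => U ω = false) := by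
      unfold ex num'
      rw [← Finset.sum_add_distrib]
      exact Finset.sum_congr rfl fun ω _ => by cases h : U ω <;> simp [h]
    rw [h2, numU a true, numU a false]
  have exYT : ex p (Y true) = 0 := by rw [exY true, hY1 true, hY1 false]; norm_num
  have exYF : ex p (Y false) = 0 := by rw [exY false, hY0 true, hY0 false]; norm_num
  -- generic decomposition of an expectation over the 8 cells
  have exG : ∀ (W : Ω → ℝ) (G : Bool → Ω → ℝ), (∀ ω, 0 < p ω → W ω = G (A ω) ω) →
      ex p W =
        num' p (G true) (fun ω => U ω = true ∧ A ω = true ∧ Z ω = true) +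
        num' p (G true) (fun ω => U ω = true ∧ A ω = true ∧ Z ω = false) +
        num' p (G false) (fun ω => U ω = true ∧ A ω = false ∧ Z ω = true) +
        num' p (G false) (fun ω => U ω = true ∧ A ω = false ∧ Z ω = false) +
        num' p (G true) (fun ω => U ω = false ∧ A ω = true ∧ Z ω = true) +
        num' p (G true) (fun ω => U ω = false ∧ A ω = true ∧ Z ω = false) +
        num' p (G false) (fun ω => U ω = false ∧ A ω = false ∧ Z ω = true) +
        num' p (G false) (fun ω => U ω = false ∧ A ω = false ∧ Z ω = false) := by
    intro W G hWG
    unfold ex num'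
    simp only [← Finset.sum_add_distrib]
    refine Finset.sum_congr rfl fun ω _ => ?_
    have hW : p ω * W ω = p ω * G (A ω) ω := by
      rcases eq_or_lt_of_le (hp ω) with h0 | h0
      · rw [← h0]; ring
      · rw [hWG ω h0]
    rw [hW]
    rcases Bool.dichotomy (U ω) with hu | hu <;> rcases Bool.dichotomy (A ω) with ha | ha <;>
      rcases Bool.dichotomy (Z ω) with hz | hz <;> simp [hu, ha, hz]
  -- observed-data mean
  have exYo : ex p Yo = -0.3 := by
    rw [exG Yo Y hcons,
      hnum true true true true, hnum true true true false,
      hnum false true false true, hnum false true false false,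
      hnum true false true true, hnum true false true false,
      hnum false false false true, hnum false false false false,
      hY1 true, hY1 false, hY0 true, hY0 false,
      hq1 true true, hq1 true false, hq1 false true, hq1 false false,
      hq0 true true, hq0 true false, hq0 false true, hq0 false false]
    norm_num
  -- numerators conditional on A
  have numA : ∀ a a', num' p (Y a) (fun ω => A ω = a') =
      cex p (Y a) (fun ω => U ω = true) *
        (pr p (fun ω => U ω = true ∧ Z ω = true ∧ A ω = a')
          + pr p (fun ω => U ω = true ∧ Z ω = false ∧ A ω = a')) +
      cex p (Y a) (fun ω => U ω = false) *
        (pr p (fun ω => U ω = false ∧ Z ω = true ∧ A ω = a')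
          + pr p (fun ω => U ω = false ∧ Z ω = false ∧ A ω = a')) := by
    intro a a'
    have h4 : num' p (Y a) (fun ω => A ω = a') =
        num' p (Y a) (fun ω => U ω = true ∧ A ω = a' ∧ Z ω = true) +
        num' p (Y a) (fun ω => U ω = true ∧ A ω = a' ∧ Z ω = false) +
        num' p (Y a) (fun ω => U ω = false ∧ A ω = a' ∧ Z ω = true) +
        num' p (Y a) (fun ω => U ω = false ∧ A ω = a' ∧ Z ω = false) := by
      unfold num'
      simp only [← Finset.sum_add_distrib]
      exact Finset.sum_congr rfl fun ω _ => by
        rcases Bool.dichotomy (U ω) with hu | hu <;> rcases Bool.dichotomy (Z ω) with hz | hz <;>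
          by_cases ha : A ω = a' <;> simp [hu, hz, ha]
    rw [h4, hnum a true a' true, hnum a true a' false, hnum a false a' true,
      hnum a false a' false]
    ring
  have prA4 : ∀ a', pr p (fun ω => A ω = a') =
      pr p (fun ω => U ω = true ∧ Z ω = true ∧ A ω = a')
      + pr p (fun ω => U ω = true ∧ Z ω = false ∧ A ω = a')
      + pr p (fun ω => U ω = false ∧ Z ω = true ∧ A ω = a')
      + pr p (fun ω => U ω = false ∧ Z ω = false ∧ A ω = a') := by
    intro a'
    unfold pr
    simp only [← Finset.sum_add_distrib]
    exact Finset.sum_congr rfl fun ω _ => by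
      rcases Bool.dichotomy (U ω) with hu | hu <;> rcases Bool.dichotomy (Z ω) with hz | hz <;>
        by_cases ha : A ω = a' <;> simp [hu, hz, ha]
  have prAT : pr p (fun ω => A ω = true) = 0.35 := by
    rw [prA4 true, hq1 true true, hq1 true false, hq1 false true, hq1 false false]; norm_num
  have prAF : pr p (fun ω => A ω = false) = 0.65 := by
    rw [prA4 false, hq0 true true, hq0 true false, hq0 false true, hq0 false false]; norm_num
  -- conditional expectations of potential outcomes given A
  have cTT : cex p (Y true) (fun ω => A ω = true) = -3/7 := by
    rw [cex_eq', numA true true, prAT, hY1 true, hY1 false,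
      hq1 true true, hq1 true false, hq1 false true, hq1 false false]
    norm_num
  have cFT : cex p (Y false) (fun ω => A ω = true) = 3/7 := by
    rw [cex_eq', numA false true, prAT, hY0 true, hY0 false,
      hq1 true true, hq1 true false, hq1 false true, hq1 false false]
    norm_num
  have cTF : cex p (Y true) (fun ω => A ω = false) = 3/13 := by
    rw [cex_eq', numA true false, prAF, hY1 true, hY1 false,
      hq0 true true, hq0 true false, hq0 false true, hq0 false false]
    norm_num
  have cFF : cex p (Y false) (fun ω => A ω = false) = -3/13 := by
    rw [cex_eq', numA false false, prAF, hY0 true, hY0 false,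
      hq0 true true, hq0 true false, hq0 false true, hq0 false false]
    norm_num
  -- determine g_sup
  have g1 : gsup true = false := by
    cases hg : gsup true
    · rfl
    · have h := hgsup true false
      rw [hg, cTT, cFT] at h
      norm_num at h
  have g0 : gsup false = true := by
    cases hg : gsup false
    · have h := hgsup false true
      rw [hg, cTF, cFF] at h
      norm_num at h
    · rfl
  -- superoptimal value
  have exS : ex p (fun ω => Y (gsup (A ω)) ω) = 0.3 := by
    have h := exG (fun ω => Y (gsup (A ω)) ω) (fun a ω => Y (gsup a) ω) (fun ω _ => rfl)
    simp only [g0, g1] at h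
    rw [h,
      hnum false true true true, hnum false true true false,
      hnum true true false true, hnum true true false false,
      hnum false false true true, hnum false false true false,
      hnum true false false true, hnum true false false false,
      hY1 true, hY1 false, hY0 true, hY0 false,
      hq1 true true, hq1 true false, hq1 false true, hq1 false false,
      hq0 true true, hq0 true false, hq0 false true, hq0 false false]
    norm_num
  refine ⟨exYo, ?_, exS, ?_, ?_⟩
  · rw [exYT, exYF]; norm_num
  · rw [exS, exYo]; norm_num
  · rw [exS, exYT, exYF]; norm_num
end
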